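/- Let W = (W_1,...,W_n) be weighted left creation operators associated with an admissible g, acting on F^2(H_n), and let K be a Hilbert space. A subspace M ⊆ F^2(H_n) ⊗ K is reducing for each W_i ⊗ I_K if and only if M = F^2(H_n) ⊗ E for some closed subspace E ⊆ K. -/

import Mathlib

open scoped InnerProductSpace
open Filter

noncomputable section

/-- Words in the free semigroup `F_n^+`, encoded as lists over `Fin n`. -/
abbrev Word (n : ℕ) := List (Fin n)

/-- The full Fock space tensored with `K`, realized as `ℓ²`-sequences over words with values
in `K`; for `K = ℂ` this is the full Fock space `F²(H_n)` with orthonormal basis `{e_α}`. -/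
abbrev FockK (n : ℕ) (K : Type*) [NormedAddCommGroup K] [InnerProductSpace ℂ K] :=
  lp (fun _ : Word n => K) 2

/-- The finite set of words of length `p`. -/
def wordsLen (n p : ℕ) : Finset (Word n) :=
  (Finset.univ : Finset (List.Vector (Fin n) p)).image List.Vector.toList

variable {n : ℕ} {E : Type*} [NormedAddCommGroup E] [InnerProductSpace ℂ E] [CompleteSpace E]

/-- For a word `α = g_{i₁} ⋯ g_{i_k}`, the operator `X_α = X_{i₁} ⋯ X_{i_k}`. -/
def wordOp (X : Fin n → (E →L[ℂ] E)) (α : Word n) : E →L[ℂ] E := (α.map X).prod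

/-- Partial sums `∑_{p < N} ∑_{|α| = p} a_α X_α X_α^*` of the defect series
`Δ_{g⁻¹}(X, X^*)` associated with the coefficients `a` of `g⁻¹`. -/
def deltaPartial (a : Word n → ℝ) (X : Fin n → (E →L[ℂ] E)) (N : ℕ) : E →L[ℂ] E :=
  ∑ p ∈ Finset.range N, ∑ α ∈ wordsLen n p,
    (a α : ℂ) • (wordOp X α ∘L (wordOp X α).adjoint)

/-!
`W_α` sends `e_∅ ⊗ k` to a nonzero multiple of `e_α ⊗ k`, and `W_α^*` moves the `α`-coordinate
of a vector to the vacuum up to a nonzero factor. A closed reducing subspace `M` is invariant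
under every partial sum of `Δ_{g⁻¹}(W,W^*)`, hence contains the SOT limit `e_∅ ⊗ x_∅` of
`x ∈ M`. So with `E = {k | e_∅ ⊗ k ∈ M}`, a vector lies in `M` iff all its coordinates lie in
`E`. Conversely `F²(H_n) ⊗ E` is reducing because `W_i ⊗ I_K` and its adjoint act on
coordinates by scalars.
-/

open scoped ENNReal

theorem lp.apply_mem_of_forall_single_mem {𝕜 ι F : Type*} {V : ι → Type*} [NormedField 𝕜]
    [∀ i, NormedAddCommGroup (V i)] [∀ i, NormedSpace 𝕜 (V i)] [NormedAddCommGroup F]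
    [NormedSpace 𝕜 F] [DecidableEq ι] {p : ℝ≥0∞} [Fact (1 ≤ p)] (hp : p ≠ ∞)
    (T : lp V p →L[𝕜] F) {N : Submodule 𝕜 F} (hN : IsClosed (N : Set F)) (f : lp V p)
    (h : ∀ i, T (lp.single p i (f i)) ∈ N) : T f ∈ N :=
  hN.mem_of_tendsto ((lp.hasSum_single hp f).mapL T)
    (.of_forall fun _ => N.sum_mem fun i _ => h i)

section WordOp

variable {H : Type*} [NormedAddCommGroup H] [InnerProductSpace ℂ H] {X : Fin n → (H →L[ℂ] H)}
  {M : Submodule ℂ H}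

theorem wordOp_nil (X : Fin n → (H →L[ℂ] H)) : wordOp X [] = 1 :=
  rfl

theorem wordOp_cons (X : Fin n → (H →L[ℂ] H)) (i : Fin n) (α : Word n) :
    wordOp X (i :: α) = X i ∘L wordOp X α :=
  List.prod_cons

theorem wordOp_mem (hX : ∀ i, ∀ x ∈ M, X i x ∈ M) (α : Word n) {x : H} (hx : x ∈ M) :
    wordOp X α x ∈ M := by
  induction α with
  | nil => exact hx
  | cons i β ih => exact hX i _ ih

variable [CompleteSpace H]

theorem adjoint_wordOp_mem (hX : ∀ i, ∀ x ∈ M, (X i).adjoint x ∈ M) (α : Word n) {x : H}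
    (hx : x ∈ M) : (wordOp X α).adjoint x ∈ M := by
  induction α generalizing x with
  | nil => rwa [wordOp_nil, ContinuousLinearMap.adjoint_one]
  | cons i β ih =>
    rw [wordOp_cons, ContinuousLinearMap.adjoint_comp]
    exact ih (hX i x hx)

theorem deltaPartial_mem (a : Word n → ℝ) (hX : ∀ i, ∀ x ∈ M, X i x ∈ M)
    (hX' : ∀ i, ∀ x ∈ M, (X i).adjoint x ∈ M) (N : ℕ) {x : H} (hx : x ∈ M) :
    deltaPartial a X N x ∈ M := by
  simp only [deltaPartial, FunLike.coe_sum, Finset.sum_apply,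
    FunLike.coe_smul, Pi.smul_apply, ContinuousLinearMap.comp_apply]
  exact M.sum_mem fun p _ => M.sum_mem fun α _ =>
    M.smul_mem _ (wordOp_mem hX α (adjoint_wordOp_mem hX' α hx))

theorem mem_of_tendsto_deltaPartial {a : Word n → ℝ} (hM : IsClosed (M : Set H))
    (hX : ∀ i, ∀ x ∈ M, X i x ∈ M) (hX' : ∀ i, ∀ x ∈ M, (X i).adjoint x ∈ M) {x y : H}
    (hx : x ∈ M) (hy : Tendsto (fun N => deltaPartial a X N x) atTop (nhds y)) : y ∈ M :=
  hM.mem_of_tendsto hy (.of_forall fun N => deltaPartial_mem a hX hX' N hx)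

end WordOp

section WeightedShift

variable {K : Type*} [NormedAddCommGroup K] [InnerProductSpace ℂ K]

def IsWeightedShift (W : Fin n → (FockK n K →L[ℂ] FockK n K)) (c : Fin n → Word n → ℝ) :
    Prop :=
  ∀ i α k, W i (lp.single 2 α k) = (c i α : ℂ) • lp.single 2 (i :: α) k

variable {W : Fin n → (FockK n K →L[ℂ] FockK n K)} {c : Fin n → Word n → ℝ}

namespace IsWeightedShift

theorem wordOp_single_nil (hW : IsWeightedShift W c) (hc : ∀ i α, c i α ≠ 0) (α : Word n)
    (k : K) : ∃ r : ℂ, r ≠ 0 ∧ wordOp W α (lp.single 2 [] k) = r • lp.single 2 α k := by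
  induction α with
  | nil => exact ⟨1, one_ne_zero, by simp [wordOp_nil]⟩
  | cons i β ih =>
    obtain ⟨r, hr, h⟩ := ih
    refine ⟨c i β * r, mul_ne_zero (by exact_mod_cast hc i β) hr, ?_⟩
    rw [wordOp_cons, ContinuousLinearMap.comp_apply, h, map_smul, hW, smul_smul, mul_comm]

theorem apply_mem (hW : IsWeightedShift W c) {S : Submodule ℂ K} (hS : IsClosed (S : Set K))
    (i : Fin n) {f : FockK n K} (hf : ∀ α, f α ∈ S) (α : Word n) : W i f α ∈ S := by
  refine lp.apply_mem_of_forall_single_mem ENNReal.ofNat_ne_top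
    (lp.evalCLM ℂ _ 2 α ∘L W i) hS f fun β => ?_
  rw [ContinuousLinearMap.comp_apply, hW, map_smul]
  refine S.smul_mem _ ?_
  change (lp.single 2 (i :: β) (f β) : FockK n K) α ∈ S
  by_cases hα : α = i :: β
  · subst hα
    simpa only [lp.single_apply_self] using hf β
  · simpa only [lp.single_apply_ne _ _ _ hα] using S.zero_mem

variable [CompleteSpace K]

theorem adjoint_apply (hW : IsWeightedShift W c) (i : Fin n) (x : FockK n K) (α : Word n) :
    (W i).adjoint x α = (c i α : ℂ) • x (i :: α) := by
  refine ext_inner_right ℂ fun k => ?_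
  rw [inner_smul_left, ← lp.inner_single_right (𝕜 := ℂ),
    ContinuousLinearMap.adjoint_inner_left, hW, inner_smul_right, lp.inner_single_right]
  simp

theorem adjoint_wordOp_apply_nil (hW : IsWeightedShift W c) (hc : ∀ i α, c i α ≠ 0)
    (α : Word n) (x : FockK n K) :
    ∃ r : ℂ, r ≠ 0 ∧ (wordOp W α).adjoint x [] = r • x α := by
  induction α generalizing x with
  | nil => exact ⟨1, one_ne_zero, by simp [wordOp_nil, ContinuousLinearMap.adjoint_one]⟩
  | cons i β ih =>
    obtain ⟨r, hr, h⟩ := ih ((W i).adjoint x)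
    refine ⟨r * c i β, mul_ne_zero hr (by exact_mod_cast hc i β), ?_⟩
    rw [wordOp_cons, ContinuousLinearMap.adjoint_comp, ContinuousLinearMap.comp_apply, h,
      hW.adjoint_apply, smul_smul]

theorem mem_iff_forall_single_nil_mem (hW : IsWeightedShift W c) (hc : ∀ i α, c i α ≠ 0)
    {M : Submodule ℂ (FockK n K)} (hM : IsClosed (M : Set (FockK n K)))
    (hX : ∀ i, ∀ x ∈ M, W i x ∈ M) (hX' : ∀ i, ∀ x ∈ M, (W i).adjoint x ∈ M)
    (hvac : ∀ x ∈ M, lp.single 2 [] (x []) ∈ M) (f : FockK n K) :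
    f ∈ M ↔ ∀ α, lp.single 2 [] (f α) ∈ M := by
  constructor
  · intro hf α
    obtain ⟨r, hr, h⟩ := hW.adjoint_wordOp_apply_nil hc α f
    have := hvac _ (adjoint_wordOp_mem hX' α hf)
    rwa [h, lp.single_smul, M.smul_mem_iff hr] at this
  · intro hf
    refine lp.apply_mem_of_forall_single_mem ENNReal.ofNat_ne_top (ContinuousLinearMap.id ℂ _)
      hM f fun α => ?_
    obtain ⟨r, hr, h⟩ := hW.wordOp_single_nil hc α (f α)
    have := wordOp_mem hX α (hf α)
    rwa [h, M.smul_mem_iff hr] at this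

end IsWeightedShift

end WeightedShift

theorem reducing_subspaces_of_universal_model_general
    {n : ℕ} {K : Type*} [NormedAddCommGroup K] [InnerProductSpace ℂ K] [CompleteSpace K]
    (b a : Word n → ℝ) (hb : ∀ α, 0 < b α)
    (W : Fin n → (FockK n K →L[ℂ] FockK n K))
    (hW : ∀ (i : Fin n) (α : Word n) (k : K),
      W i (lp.single 2 α k) =
        ((Real.sqrt (b α / b (i :: α)) : ℝ) : ℂ) • lp.single 2 (i :: α) k)
    (hDelta : ∀ x : FockK n K,
      Tendsto (fun N : ℕ => deltaPartial a W N x) atTop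
        (nhds (lp.single 2 ([] : Word n) ((x : ∀ _ : Word n, K) []))))
    (M : Submodule ℂ (FockK n K)) (hM : IsClosed (M : Set (FockK n K))) :
    (∀ i : Fin n, (∀ x ∈ M, W i x ∈ M) ∧ (∀ x ∈ M, (W i).adjoint x ∈ M)) ↔
      ∃ E : Submodule ℂ K, IsClosed (E : Set K) ∧
        ∀ f : FockK n K, f ∈ M ↔ ∀ α : Word n, (f : ∀ _ : Word n, K) α ∈ E := by
  have hc : ∀ i α, √(b α / b (i :: α)) ≠ 0 := fun i α =>
    (Real.sqrt_pos.2 (div_pos (hb α) (hb _))).ne'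
  have hWc : IsWeightedShift W fun i α => √(b α / b (i :: α)) := hW
  constructor
  · intro hred
    have hX i := (hred i).1
    have hX' i := (hred i).2
    let ι₀ : K →L[ℂ] FockK n K := lp.singleContinuousLinearMap ℂ (fun _ : Word n => K) 2 []
    refine ⟨M.comap ι₀.toLinearMap, hM.preimage ι₀.continuous, ?_⟩
    exact hWc.mem_iff_forall_single_nil_mem hc hM hX hX' fun x hx =>
      mem_of_tendsto_deltaPartial hM hX hX' hx (hDelta x)
  · rintro ⟨E, hE, hME⟩ i
    refine ⟨fun x hx => (hME _).2 (hWc.apply_mem hE i ((hME x).1 hx)),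
      fun x hx => (hME _).2 fun α => ?_⟩
    rw [hWc.adjoint_apply]
    exact E.smul_mem _ ((hME x).1 hx _)

/-- For the universal model `W` of an admissible `g` (so that
`Δ_{g⁻¹}(W,W*) ⊗ I_K` converges SOT to the vacuum projection tensor `I_K`), a closed subspace
`M ⊆ F²(H_n) ⊗ K` is reducing for all `W_i ⊗ I_K` iff `M = F²(H_n) ⊗ E` for some closed
`E ⊆ K`. -/
theorem reducing_subspaces_of_universal_model
    {n : ℕ} {K : Type*} [NormedAddCommGroup K] [InnerProductSpace ℂ K] [CompleteSpace K]
    (b a : Word n → ℝ) (hb : ∀ α, 0 < b α) (hb0 : b ([] : Word n) = 1)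
    (ha0 : a ([] : Word n) = 1)
    (hbd : ∃ C : ℝ, ∀ (i : Fin n) (α : Word n), b α / b (i :: α) ≤ C)
    (W : Fin n → (FockK n K →L[ℂ] FockK n K))
    (hW : ∀ (i : Fin n) (α : Word n) (k : K),
      W i (lp.single 2 α k) =
        ((Real.sqrt (b α / b (i :: α)) : ℝ) : ℂ) • lp.single 2 (i :: α) k)
    (hDelta : ∀ x : FockK n K,
      Tendsto (fun N : ℕ => deltaPartial a W N x) atTop
        (nhds (lp.single 2 ([] : Word n) ((x : ∀ _ : Word n, K) []))))
    (M : Submodule ℂ (FockK n K)) (hM : IsClosed (M : Set (FockK n K))) :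
    (∀ i : Fin n, (∀ x ∈ M, W i x ∈ M) ∧ (∀ x ∈ M, (W i).adjoint x ∈ M)) ↔
      ∃ E : Submodule ℂ K, IsClosed (E : Set K) ∧
        ∀ f : FockK n K, f ∈ M ↔ ∀ α : Word n, (f : ∀ _ : Word n, K) α ∈ E :=
  reducing_subspaces_of_universal_model_general b a hb W hW hDelta M hM
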